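/- Soundness of the iteration: if J ∈ 𝔄ₙ (the n-th set of systems produced by the decision algorithm starting from I) and J is solvable at depth k by a closed substitution, then I is solvable at depth k + n. -/

import Mathlib

/-- Types over a type alphabet whose constructors are at most unary:
type parameters, nullary constructors and unary constructors. -/
inductive UTy (C : Type) where
  | param : ℕ → UTy C
  | con0 : C → UTy C
  | con1 : C → UTy C → UTy C
deriving DecidableEq

/-- The subtype relation on types (arguments are compared only up to the
minimum of the arities). -/
inductive USub {C : Type} [LE C] : UTy C → UTy C → Prop where
  | param (n : ℕ) : USub (.param n) (.param n)
  | con00 {K L : C} : K ≤ L → USub (.con0 K) (.con0 L)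
  | con01 {K L : C} {τ : UTy C} : K ≤ L → USub (.con0 K) (.con1 L τ)
  | con10 {K L : C} {σ : UTy C} : K ≤ L → USub (.con1 K σ) (.con0 L)
  | con11 {K L : C} {σ τ : UTy C} : K ≤ L → USub σ τ →
      USub (.con1 K σ) (.con1 L τ)

/-- Applying a parameter substitution to a type. -/
def UTy.subst {C : Type} (Φ : ℕ → UTy C) : UTy C → UTy C
  | .param n => Φ n
  | .con0 K => .con0 K
  | .con1 K σ => .con1 K (σ.subst Φ)

/-- The list of type parameters of a type. -/
def UTy.params {C : Type} : UTy C → List ℕ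
  | .param n => [n]
  | .con0 _ => []
  | .con1 _ σ => σ.params

/-- The depth of a type. -/
def UTy.depth {C : Type} : UTy C → ℕ
  | .param _ => 0
  | .con0 _ => 1
  | .con1 _ σ => 1 + σ.depth

/-- The domain of a parameter substitution. -/
def substDom {C : Type} (Φ : ℕ → UTy C) : Set ℕ := {n | Φ n ≠ .param n}

/-- `AllParSubst A` is the set of parameter substitutions `Φ` with
`dom(Φ) ⊆ A`, `depth(Φ) ≤ 1`, and `Par(αΦ) ⊆ {α}` but `αΦ ≠ α`
for all `α ∈ A`. -/
def AllParSubst {C : Type} (A : Set ℕ) : Set (ℕ → UTy C) :=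
  {Φ | substDom Φ ⊆ A ∧ (∀ m ∈ substDom Φ, (Φ m).depth ≤ 1) ∧
    ∀ a ∈ A, (∀ n ∈ (Φ a).params, n = a) ∧ Φ a ≠ .param a}

/-- A type inequation `σ ⪯ τ`. -/
abbrev UIneq (C : Type) := UTy C × UTy C

/-- A system of type inequations is solvable. -/
def USolvable {C : Type} [LE C] (I : Set (UIneq C)) : Prop :=
  ∃ Φ : ℕ → UTy C, ∀ p ∈ I, USub (p.1.subst Φ) (p.2.subst Φ)

/-- The set of type parameters of a system of type inequations. -/
def sysParams {C : Type} (I : Set (UIneq C)) : Set ℕ :=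
  {n | ∃ p ∈ I, n ∈ p.1.params ∨ n ∈ p.2.params}

/-- Applying a parameter substitution to a system of type inequations. -/
def applySys {C : Type} (Φ : ℕ → UTy C) (I : Set (UIneq C)) : Set (UIneq C) :=
  (fun p : UIneq C => (p.1.subst Φ, p.2.subst Φ)) '' I

/-- The possible results of normalizing a type inequation: `true`, `false`,
or an inequation. -/
inductive NFr (C : Type) where
  | isTrue : NFr C
  | isFalse : NFr C
  | ineq : UTy C → UTy C → NFr C

open Classical in
/-- The normal form `nf(σ ⪯ τ)` of a type inequation. -/
noncomputable def nf {C : Type} [LE C] : UTy C → UTy C → NFr C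
  | .param a, τ => .ineq (.param a) τ
  | σ, .param a => .ineq σ (.param a)
  | .con0 K, .con0 L => if K ≤ L then .isTrue else .isFalse
  | .con0 K, .con1 L _ => if K ≤ L then .isTrue else .isFalse
  | .con1 K _, .con0 L => if K ≤ L then .isTrue else .isFalse
  | .con1 K σ, .con1 L τ => if K ≤ L then nf σ τ else .isFalse

open Classical in
/-- Normalizing a system of type inequations: each inequation is replaced by
its normal form, inequations equivalent to `true` are discarded, and if some
inequation is equivalent to `false` the whole system collapses to the
unsolvable system (represented by `none`). -/
noncomputable def nfSys {C : Type} [LE C] (I : Set (UIneq C)) :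
    Option (Set (UIneq C)) :=
  if ∃ p ∈ I, nf p.1 p.2 = NFr.isFalse then none
  else some {q | ∃ p ∈ I, nf p.1 p.2 = NFr.ineq q.1 q.2}

/-- `Inst I` is the set of (normalized, non-failed) instantiations of the
system `I` along substitutions from `AllParSubst(Par I)`. -/
noncomputable def Inst {C : Type} [LE C] (I : Set (UIneq C)) :
    Set (Set (UIneq C)) :=
  {J | ∃ Φ ∈ AllParSubst (C := C) (sysParams I),
    nfSys (applySys Φ I) = some J}

/-- One iteration of the decision algorithm: from the pair (current systems
`𝔄`, memo `𝔐`) produce the next pair, applying `Inst` to every system and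
discarding systems already seen. -/
noncomputable def algIter {C : Type} [LE C] (I : Set (UIneq C)) :
    ℕ → Set (Set (UIneq C)) × Set (Set (UIneq C))
  | 0 => ({I}, {I})
  | n + 1 =>
      let p := algIter I n
      let A := {K | ∃ J ∈ p.1, K ∈ Inst J} \ p.2
      (A, p.2 ∪ A)

/-- `frakA I n` is the set `𝔄ₙ` of systems produced by the `n`-th iteration
of the decision algorithm started on `I`. -/
noncomputable def frakA {C : Type} [LE C] (I : Set (UIneq C)) (n : ℕ) :
    Set (Set (UIneq C)) :=
  (algIter I n).1

/-- `◇ₖ I`: the system `I` is solvable at depth `k` by a closed parameter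
substitution. -/
def SolvAt {C : Type} [LE C] (k : ℕ) (I : Set (UIneq C)) : Prop :=
  ∃ Φ : ℕ → UTy C,
    (∀ m, Φ m ≠ .param m → (Φ m).params = [] ∧ (Φ m).depth ≤ k) ∧
    ∀ p ∈ I, USub (p.1.subst Φ) (p.2.subst Φ)

/-! A single `Inst` step is sound: if `Ψ` solves `nf(IΦ)` closed at depth `k`, then `Φ` followed
by `Ψ` solves `I`, since normalization only discards true inequations and strips matching
constructors. The composite has depth `≤ k + 1` because `Φ` has depth `≤ 1`, but it can be open:
a parameter `α` with `αΦ = K(α)` outside the domain of `Ψ` is sent to `K(α)`. Chopping such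
values to the nullary `K` keeps every subtyping, because `USub` compares arguments only up to the
minimum of the arities. Induction along `𝔄₀, 𝔄₁, …` then costs one level of depth per step. -/

namespace UTy

variable {C : Type}

theorem subst_subst (σ : UTy C) (Φ Ψ : ℕ → UTy C) :
    (σ.subst Φ).subst Ψ = σ.subst (fun m => (Φ m).subst Ψ) := by
  induction σ with
  | param n => rfl
  | con0 K => rfl
  | con1 K σ ih => simp [subst, ih]

/-- `IsPruningOf σ' σ`: `σ'` arises from `σ` by cutting some subtrees `K(ρ)` down to `K`. -/
inductive IsPruningOf : UTy C → UTy C → Prop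
  | param (n : ℕ) : IsPruningOf (.param n) (.param n)
  | con0 (K : C) : IsPruningOf (.con0 K) (.con0 K)
  | con1 (K : C) {σ' σ : UTy C} : IsPruningOf σ' σ → IsPruningOf (.con1 K σ') (.con1 K σ)
  | chop (K : C) (σ : UTy C) : IsPruningOf (.con0 K) (.con1 K σ)

theorem IsPruningOf.refl : ∀ σ : UTy C, IsPruningOf σ σ
  | .param n => .param n
  | .con0 K => .con0 K
  | .con1 K σ => .con1 K (IsPruningOf.refl σ)

theorem IsPruningOf.subst {Θ' Θ : ℕ → UTy C} (h : ∀ m, IsPruningOf (Θ' m) (Θ m)) :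
    ∀ σ : UTy C, IsPruningOf (σ.subst Θ') (σ.subst Θ)
  | .param n => h n
  | .con0 K => .con0 K
  | .con1 K σ => .con1 K (IsPruningOf.subst h σ)

def pruneOpen : UTy C → UTy C
  | .con1 K σ => if σ.params = [] then .con1 K σ else .con0 K
  | σ => σ

theorem isPruningOf_pruneOpen : ∀ σ : UTy C, IsPruningOf (pruneOpen σ) σ
  | .param n => .param n
  | .con0 K => .con0 K
  | .con1 K σ => by
    rw [pruneOpen]
    split
    · exact IsPruningOf.refl _
    · exact .chop K σ

theorem pruneOpen_of_params_eq_nil : ∀ {σ : UTy C}, σ.params = [] → pruneOpen σ = σ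
  | .con0 _, _ => rfl
  | .con1 _ _, h => if_pos h

/-- Here `σ` is the value at `m` of a substitution in `AllParSubst`. -/
theorem pruneOpen_subst_closed {σ : UTy C} {Ψ : ℕ → UTy C} {m k : ℕ} (hσd : σ.depth ≤ 1)
    (hσp : ∀ n ∈ σ.params, n = m)
    (hΨ : Ψ m ≠ .param m → (Ψ m).params = [] ∧ (Ψ m).depth ≤ k)
    (hm : pruneOpen (σ.subst Ψ) ≠ .param m) :
    (pruneOpen (σ.subst Ψ)).params = [] ∧ (pruneOpen (σ.subst Ψ)).depth ≤ k + 1 := by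
  match σ with
  | .param n =>
    obtain rfl : n = m := hσp n (List.mem_singleton_self n)
    have hΨn : Ψ n ≠ .param n := fun h => hm (by simp [h, subst, pruneOpen])
    obtain ⟨hclosed, hdepth⟩ := hΨ hΨn
    simp only [subst, pruneOpen_of_params_eq_nil hclosed]
    exact ⟨hclosed, by omega⟩
  | .con0 K => exact ⟨rfl, by simp [subst, pruneOpen, depth]⟩
  | .con1 K (.param n) =>
    obtain rfl : n = m := hσp n (List.mem_singleton_self n)
    simp only [subst, pruneOpen]
    split
    case isTrue hclosed =>
      have hΨn : Ψ n ≠ .param n := fun h => by simp [h, params] at hclosed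
      exact ⟨hclosed, by simp only [depth]; linarith [(hΨ hΨn).2]⟩
    case isFalse => exact ⟨rfl, by simp [depth]⟩
  | .con1 K (.con0 _) | .con1 K (.con1 _ _) => simp [depth] at hσd

end UTy

section Subtyping

variable {C : Type} [LE C]

theorem USub.of_isPruningOf {σ τ σ' τ' : UTy C} (h : USub σ τ) (hσ : σ'.IsPruningOf σ)
    (hτ : τ'.IsPruningOf τ) : USub σ' τ' := by
  induction h generalizing σ' τ' with
  | param n => cases hσ; cases hτ; exact .param n
  | con00 h => cases hσ; cases hτ; exact .con00 h
  | con01 h => cases hσ; cases hτ <;> first | exact .con01 h | exact .con00 h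
  | con10 h => cases hτ; cases hσ <;> first | exact .con10 h | exact .con00 h
  | con11 h _ ih =>
    cases hσ with
    | con1 _ hσ' => cases hτ with
      | con1 _ hτ' => exact .con11 h (ih hσ' hτ')
      | chop => exact .con10 h
    | chop => cases hτ <;> first | exact .con01 h | exact .con00 h

theorem USub.subst_of_nf_eq_isTrue {σ τ : UTy C} (h : nf σ τ = .isTrue) (Ψ : ℕ → UTy C) :
    USub (σ.subst Ψ) (τ.subst Ψ) := by
  induction σ generalizing τ with
  | param a => simp [nf] at h
  | con0 K =>
    cases τ with
    | param a => simp [nf] at h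
    | con0 L => simp only [nf, ite_eq_left_iff, reduceCtorEq] at h; exact .con00 (not_not.1 h)
    | con1 L τ => simp only [nf, ite_eq_left_iff, reduceCtorEq] at h; exact .con01 (not_not.1 h)
  | con1 K σ ih =>
    cases τ with
    | param a => simp [nf] at h
    | con0 L => simp only [nf, ite_eq_left_iff, reduceCtorEq] at h; exact .con10 (not_not.1 h)
    | con1 L τ =>
      simp only [nf] at h
      split at h
      case isTrue hKL => exact .con11 hKL (ih h)
      case isFalse => cases h

theorem USub.subst_of_nf_eq_ineq {σ τ α β : UTy C} (h : nf σ τ = .ineq α β) {Ψ : ℕ → UTy C}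
    (hαβ : USub (α.subst Ψ) (β.subst Ψ)) : USub (σ.subst Ψ) (τ.subst Ψ) := by
  induction σ generalizing τ with
  | param a => simp only [nf, NFr.ineq.injEq] at h; obtain ⟨rfl, rfl⟩ := h; exact hαβ
  | con0 K =>
    cases τ with
    | param a => simp only [nf, NFr.ineq.injEq] at h; obtain ⟨rfl, rfl⟩ := h; exact hαβ
    | con0 | con1 => simp only [nf] at h; split at h <;> cases h
  | con1 K σ ih =>
    cases τ with
    | param a => simp only [nf, NFr.ineq.injEq] at h; obtain ⟨rfl, rfl⟩ := h; exact hαβ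
    | con0 L => simp only [nf] at h; split at h <;> cases h
    | con1 L τ =>
      simp only [nf] at h
      split at h
      case isTrue hKL => exact .con11 hKL (ih h)
      case isFalse => cases h

theorem USub.subst_of_nfSys_eq_some {I J : Set (UIneq C)} (h : nfSys I = some J)
    {Ψ : ℕ → UTy C} (hJ : ∀ q ∈ J, USub (q.1.subst Ψ) (q.2.subst Ψ)) :
    ∀ p ∈ I, USub (p.1.subst Ψ) (p.2.subst Ψ) := by
  rw [nfSys] at h
  split at h
  case isTrue => cases h
  case isFalse hnoFalse =>
    cases h
    intro p hp
    match hnf : nf p.1 p.2 with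
    | .isTrue => exact USub.subst_of_nf_eq_isTrue hnf Ψ
    | .isFalse => exact absurd ⟨p, hp, hnf⟩ hnoFalse
    | .ineq α β => exact USub.subst_of_nf_eq_ineq hnf (hJ (α, β) ⟨p, hp, hnf⟩)

end Subtyping

theorem AllParSubst.depth_le_one_and_params {C : Type} {A : Set ℕ} {Φ : ℕ → UTy C}
    (hΦ : Φ ∈ AllParSubst A) (m : ℕ) : (Φ m).depth ≤ 1 ∧ ∀ n ∈ (Φ m).params, n = m := by
  obtain ⟨hdom, hdepth, hparams⟩ := hΦ
  by_cases hm : m ∈ substDom Φ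
  · exact ⟨hdepth m hm, (hparams m (hdom hm)).1⟩
  · have hm : Φ m = .param m := not_not.1 hm
    simp [hm, UTy.depth, UTy.params]

theorem SolvAt.of_mem_Inst {C : Type} [LE C] {I J : Set (UIneq C)} {k : ℕ} (hJ : J ∈ Inst I)
    (hsol : SolvAt k J) : SolvAt (k + 1) I := by
  obtain ⟨Φ, hΦ, hnf⟩ := hJ
  obtain ⟨Ψ, hΨ, hΨJ⟩ := hsol
  have hΦΨ : ∀ p ∈ I, USub ((p.1.subst Φ).subst Ψ) ((p.2.subst Φ).subst Ψ) := fun p hp =>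
    USub.subst_of_nfSys_eq_some hnf hΨJ _ (Set.mem_image_of_mem _ hp)
  refine ⟨fun m => ((Φ m).subst Ψ).pruneOpen, fun m hm => ?_, fun p hp => ?_⟩
  · obtain ⟨hdepth, hparams⟩ := AllParSubst.depth_le_one_and_params hΦ m
    exact UTy.pruneOpen_subst_closed hdepth hparams (hΨ m) hm
  · have hprune : ∀ m, (((Φ m).subst Ψ).pruneOpen).IsPruningOf ((Φ m).subst Ψ) := fun m =>
      UTy.isPruningOf_pruneOpen _
    simp only [UTy.subst_subst] at hΦΨ
    exact (hΦΨ p hp).of_isPruningOf (.subst hprune p.1) (.subst hprune p.2)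

theorem frakA_zero {C : Type} [LE C] (I : Set (UIneq C)) : frakA I 0 = {I} := rfl

theorem exists_mem_Inst_of_mem_frakA_succ {C : Type} [LE C] {I J : Set (UIneq C)} {n : ℕ}
    (hJ : J ∈ frakA I (n + 1)) : ∃ J' ∈ frakA I n, J ∈ Inst J' :=
  hJ.1

/-- Soundness of the iteration: if `J ∈ 𝔄ₙ` and `J` is
solvable at depth `k` by a closed substitution, then `I` is solvable at depth
`k + n`. -/
theorem frakA_sound {C : Type} [PartialOrder C] (I J : Set (UIneq C))
    (n k : ℕ) (hJ : J ∈ frakA I n) (hsol : SolvAt k J) :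
    SolvAt (k + n) I := by
  induction n generalizing J k with
  | zero =>
    rw [frakA_zero, Set.mem_singleton_iff] at hJ
    exact hJ ▸ hsol
  | succ n ih =>
    obtain ⟨J', hJ', hInst⟩ := exists_mem_Inst_of_mem_frakA_succ hJ
    rw [← add_assoc, add_right_comm]
    exact ih J' (k + 1) hJ' (hsol.of_mem_Inst hInst)
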